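/- arXiv:1912.12524 — 2 statements merged into one kernel-verified Lean document; each statement's English description precedes it below -/
import Mathlib

section
/- For every t ∈ ℝ, e^{At} h hᵀ (e^{At})ᵀ = e^{2θt} · [[1/θ², 1/θ], [1/θ, 1]] + e^{θt} · [[−2/θ², −1/θ], [−1/θ, 0]] + [[1/θ², 0], [0, 0]], where the summands are 2×2 real matrices written row-by-row. -/
/-!
`A` has the distinct eigenvalues `0` and `θ`, so diagonalizing it gives
`e^{At} = [[1, (e^{θt} - 1)/θ], [0, e^{θt}]]`. Then `e^{At} h hᵀ (e^{At})ᵀ` is the outer product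
of `e^{At} h = ((e^{θt} - 1)/θ, e^{θt})` with itself, whose entries expand to the claimed
combination of `e^{2θt}`, `e^{θt}` and `1`.
-/

open Matrix

theorem Matrix.mul_vecMulVec_mul_transpose {R m n : Type*} [CommSemiring R] [Fintype m]
    (M : Matrix n m R) (x : m → R) : M * vecMulVec x x * Mᵀ = vecMulVec (M *ᵥ x) (M *ᵥ x) := by
  rw [mul_vecMulVec, vecMulVec_mul, vecMul_transpose]

theorem Matrix.exp_smul_upperTriangular_fin_two {a d : ℝ} (had : a ≠ d) (b t : ℝ) :
    NormedSpace.exp (t • !![a, b; 0, d]) =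
      !![Real.exp (a * t), b * (Real.exp (d * t) - Real.exp (a * t)) / (d - a);
        0, Real.exp (d * t)] := by
  have hda : d - a ≠ 0 := sub_ne_zero.mpr had.symm
  -- the columns of `P` are eigenvectors of `!![a, b; 0, d]` for `a` and `d`
  set P : Matrix (Fin 2) (Fin 2) ℝ := !![1, b; 0, d - a]
  have hP : IsUnit P := by
    rw [isUnit_iff_isUnit_det, det_fin_two_of]
    simpa using hda
  have hPinv : P⁻¹ = !![1, -b / (d - a); 0, 1 / (d - a)] := by
    refine inv_eq_right_inv ?_
    ext i j
    fin_cases i <;> fin_cases j <;> simp [P, mul_apply, Fin.sum_univ_two] <;> field_simp <;> ring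
  have hdiag : t • !![a, b; 0, d] = P * diagonal ![a * t, d * t] * P⁻¹ := by
    rw [hPinv]
    ext i j
    fin_cases i <;> fin_cases j <;>
      simp [P, mul_apply, Fin.sum_univ_two, vecMul, dotProduct] <;> field_simp <;> ring
  rw [hdiag, exp_conj _ _ hP, exp_diagonal, hPinv]
  ext i j
  fin_cases i <;> fin_cases j <;>
    simp [P, mul_apply, Fin.sum_univ_two, vecMul, dotProduct, Pi.exp_def,
      ← Real.exp_eq_exp_ℝ] <;> field_simp <;> ring

/-- For the Langevin drift matrix `A = [[0,1],[0,θ]]` with `θ ≠ 0` and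
`h = (0,1)ᵀ`, for every `t ∈ ℝ`:
`e^{At} h hᵀ (e^{At})ᵀ = e^{2θt} [[1/θ², 1/θ],[1/θ, 1]] + e^{θt} [[-2/θ², -1/θ],[-1/θ, 0]]
  + [[1/θ², 0],[0, 0]]`. -/
theorem langevin_noise_outer_product
    (θ : ℝ) (hθ : θ ≠ 0)
    (A : Matrix (Fin 2) (Fin 2) ℝ) (hA : A = !![0, 1; 0, θ])
    (h : Fin 2 → ℝ) (hh : h = ![0, 1]) :
    ∀ t : ℝ,
      NormedSpace.exp (t • A) * vecMulVec h h * (NormedSpace.exp (t • A))ᵀ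
        = Real.exp (2 * θ * t) • !![1/θ^2, 1/θ; 1/θ, 1]
          + Real.exp (θ * t) • !![-2/θ^2, -1/θ; -1/θ, 0]
          + !![1/θ^2, 0; 0, 0] := by
  intro t
  subst hA hh
  rw [mul_vecMulVec_mul_transpose, exp_smul_upperTriangular_fin_two hθ.symm]
  have hexp_two : Real.exp (2 * θ * t) = Real.exp (θ * t) ^ 2 := by
    rw [← Real.exp_nat_mul]; ring_nf
  ext i j
  fin_cases i <;> fin_cases j <;> simp [vecMulVec_apply, hexp_two] <;> field_simp <;> ring
end

section
/- For every t ≥ 0, ∫_0^t e^{A(t−u)} h hᵀ (e^{A(t−u)})ᵀ du = ((e^{2θt} − 1)/(2θ)) · [[1/θ², 1/θ], [1/θ, 1]] + ((e^{θt} − 1)/θ) · [[−2/θ², −1/θ], [−1/θ, 0]] + t · [[1/θ², 0], [0, 0]], an identity between 2×2 real matrices (summands written row-by-row). -/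
/-!
The drift matrix satisfies `A * A = θ • A`, so `θ⁻¹ • A` is idempotent and the exponential
series collapses to `exp (s • A) = 1 + θ⁻¹ (e^{θ s} - 1) • A`. Hence
`exp (s • A) *ᵥ h = (θ⁻¹ (e^{θ s} - 1), e^{θ s})`, and the integrand, the outer product of this
vector with itself, is a combination of `e^{2θ(t-u)}`, `e^{θ(t-u)}` and `1` with constant matrix
coefficients, which integrates termwise.
-/

open Matrix

section

open NormedSpace
open scoped Nat

variable {𝕂 𝔸 : Type*} [NontriviallyNormedField 𝕂] [CharZero 𝕂] [ContinuousSMul ℚ 𝕂]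
  [CompleteSpace 𝕂] [NormedRing 𝔸] [NormedAlgebra 𝕂 𝔸] [CompleteSpace 𝔸]

theorem IsIdempotentElem.exp_smul {P : 𝔸} (hP : IsIdempotentElem P) (x : 𝕂) :
    exp (x • P) = 1 - P + exp x • P := by
  have hterm : ∀ n : ℕ, (n !⁻¹ : 𝕂) • (x • P) ^ n
      = ((n !⁻¹ : 𝕂) • x ^ n) • P + if n = 0 then 1 - P else 0 := by
    rintro (_ | n)
    · simp
    · rw [smul_pow, hP.pow_succ_eq, if_neg n.succ_ne_zero, add_zero, smul_assoc]
  rw [add_comm]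
  refine (exp_series_hasSum_exp' (𝕂 := 𝕂) (x • P)).unique ?_
  simpa only [hterm] using
    ((exp_series_hasSum_exp' (𝕂 := 𝕂) x).smul_const P).add (hasSum_ite_eq 0 (1 - P))

theorem exp_smul_of_mul_self_eq_smul {N : 𝔸} {c : 𝕂} (hc : c ≠ 0) (hN : N * N = c • N) (s : 𝕂) :
    exp (s • N) = 1 + (c⁻¹ * (exp (s * c) - 1)) • N := by
  have hP : IsIdempotentElem (c⁻¹ • N) := by
    rw [IsIdempotentElem, smul_mul_smul_comm, hN, smul_smul, mul_assoc, inv_mul_cancel₀ hc, mul_one]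
  have hsN : s • N = (s * c) • c⁻¹ • N := by rw [smul_smul, mul_assoc, mul_inv_cancel₀ hc, mul_one]
  rw [hsN, hP.exp_smul, smul_smul, mul_comm (exp (s * c)), mul_sub, mul_one, sub_smul]
  abel

end

theorem exp_smul_langevinDrift {θ : ℝ} (hθ : θ ≠ 0) (s : ℝ) :
    NormedSpace.exp (s • !![0, 1; 0, θ]) = 1 + (θ⁻¹ * (Real.exp (s * θ) - 1)) • !![0, 1; 0, θ] := by
  let : NormedRing (Matrix (Fin 2) (Fin 2) ℝ) := Matrix.linftyOpNormedRing
  let : NormedAlgebra ℝ (Matrix (Fin 2) (Fin 2) ℝ) := Matrix.linftyOpNormedAlgebra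
  have hN : !![0, 1; 0, θ] * !![0, 1; 0, θ] = θ • !![0, (1 : ℝ); 0, θ] := by
    simp [smul_of]
  rw [Real.exp_eq_exp_ℝ]
  exact exp_smul_of_mul_self_eq_smul hθ hN s

theorem langevin_integrand_eq {θ : ℝ} (hθ : θ ≠ 0) (s : ℝ) :
    NormedSpace.exp (s • !![0, 1; 0, θ]) * vecMulVec ![0, 1] ![0, 1]
        * (NormedSpace.exp (s • !![0, 1; 0, θ]))ᵀ
      = Real.exp (2 * θ * s) • !![1/θ^2, 1/θ; 1/θ, 1]
        + Real.exp (θ * s) • !![-2/θ^2, -1/θ; -1/θ, 0] + !![1/θ^2, 0; 0, 0] := by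
  have hexp : Real.exp (2 * θ * s) = Real.exp (s * θ) ^ 2 := by
    rw [← Real.exp_nat_mul]; ring_nf
  rw [mul_vecMulVec, vecMulVec_mul, vecMul_transpose, exp_smul_langevinDrift hθ, hexp,
    mul_comm θ s]
  ext i j
  fin_cases i <;> fin_cases j <;> simp [vecMulVec_apply] <;>
    field_simp <;> ring

theorem integral_exp_mul_sub {c : ℝ} (hc : c ≠ 0) (t : ℝ) :
    ∫ u in (0 : ℝ)..t, Real.exp (c * (t - u)) = (Real.exp (c * t) - 1) / c := by
  rw [intervalIntegral.integral_comp_sub_left (fun x => Real.exp (c * x)),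
    intervalIntegral.integral_comp_mul_left _ hc, integral_exp]
  simp [div_eq_inv_mul]

theorem integral_exp_mul_sub_add_exp_mul_sub_add_const {c₁ c₂ : ℝ} (hc₁ : c₁ ≠ 0) (hc₂ : c₂ ≠ 0)
    (t p q r : ℝ) :
    ∫ u in (0 : ℝ)..t, (Real.exp (c₁ * (t - u)) * p + Real.exp (c₂ * (t - u)) * q + r)
      = (Real.exp (c₁ * t) - 1) / c₁ * p + (Real.exp (c₂ * t) - 1) / c₂ * q + t * r := by
  have hint : ∀ c, IntervalIntegrable (fun u => Real.exp (c * (t - u))) MeasureTheory.volume 0 t :=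
    fun c => (by fun_prop : Continuous _).intervalIntegrable 0 t
  have hp := (hint c₁).mul_const p
  have hq := (hint c₂).mul_const q
  rw [intervalIntegral.integral_add (hp.add hq) intervalIntegrable_const,
    intervalIntegral.integral_add hp hq, intervalIntegral.integral_mul_const,
    intervalIntegral.integral_mul_const, integral_exp_mul_sub hc₁, integral_exp_mul_sub hc₂,
    intervalIntegral.integral_const, sub_zero, smul_eq_mul]

/-- For the Langevin drift matrix `A = [[0,1],[0,θ]]` with `θ ≠ 0` and
`h = (0,1)ᵀ`, for every `t ≥ 0` (the integral being taken entrywise):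
`∫_0^t e^{A(t-u)} h hᵀ (e^{A(t-u)})ᵀ du
  = ((e^{2θt}-1)/(2θ)) [[1/θ², 1/θ],[1/θ, 1]]
    + ((e^{θt}-1)/θ) [[-2/θ², -1/θ],[-1/θ, 0]] + t [[1/θ², 0],[0, 0]]`. -/
theorem langevin_covariance_integral
    (θ : ℝ) (hθ : θ ≠ 0)
    (A : Matrix (Fin 2) (Fin 2) ℝ) (hA : A = !![0, 1; 0, θ])
    (h : Fin 2 → ℝ) (hh : h = ![0, 1]) :
    ∀ t : ℝ, 0 ≤ t →
      (Matrix.of fun i j : Fin 2 =>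
          ∫ u in (0:ℝ)..t,
            ((NormedSpace.exp ((t - u) • A)) * vecMulVec h h
              * (NormedSpace.exp ((t - u) • A))ᵀ) i j)
        = ((Real.exp (2 * θ * t) - 1) / (2 * θ)) • !![1/θ^2, 1/θ; 1/θ, 1]
          + ((Real.exp (θ * t) - 1) / θ) • !![-2/θ^2, -1/θ; -1/θ, 0]
          + t • !![1/θ^2, 0; 0, 0] := by
  intro t _
  subst hA hh
  ext i j
  simp only [of_apply, langevin_integrand_eq hθ, Matrix.add_apply, Matrix.smul_apply, smul_eq_mul]
  exact integral_exp_mul_sub_add_exp_mul_sub_add_const (mul_ne_zero two_ne_zero hθ) hθ _ _ _ _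
end
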